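/- Let v : ℝ² → ℝ be continuous, satisfying min(-Δv, v - φ) ≤ 0 with φ ≤ 0, and limsup_{|x|→∞} v(x)/log|x| ≤ -1. Then v ≤ 0 in ℝ². -/

import Mathlib

/-!
Where `v > 0` we have `v > φ`, so `Δv ≥ 0` there, and the logarithmic decay makes `v` negative
outside a large disc. If `v` were positive somewhere, then `v + ε (‖x‖² - R²)` with small `ε > 0`
would attain its maximum over the disc at an interior point where `v > 0`; but its Laplacian there
is `Δv + 4ε > 0`, which is impossible at a local maximum.
-/

noncomputable def planeLaplacian (f : EuclideanSpace ℝ (Fin 2) → ℝ)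
    (x : EuclideanSpace ℝ (Fin 2)) : ℝ :=
  ∑ i : Fin 2,
    fderiv ℝ (fun y => fderiv ℝ f y (EuclideanSpace.single i 1)) x (EuclideanSpace.single i 1)

open Filter Topology Metric

local notation "ℝ²" => EuclideanSpace ℝ (Fin 2)

theorem eventually_neg_of_limsup_div_neg {α : Type*} {l : Filter α} {f g : α → ℝ}
    (hg : ∀ᶠ x in l, 0 ≤ g x) (h : limsup (fun x => f x / g x) l < 0) :
    ∀ᶠ x in l, f x < 0 := by
  have hbdd : l.IsBoundedUnder (· ≤ ·) (fun x => f x / g x) := by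
    by_contra hu
    exact h.ne (Real.limsup_of_not_isBoundedUnder hu)
  filter_upwards [eventually_lt_of_limsup_lt h hbdd, hg] with x hfg hgx
  exact neg_of_div_neg_left hfg hgx

theorem exists_isLocalMax_mem_ball_of_lt_on_sphere {E : Type*} [NormedAddCommGroup E]
    [ProperSpace E] {w : E → ℝ} (hw : Continuous w) {c x₁ : E} {R : ℝ}
    (hx₁ : x₁ ∈ closedBall c R) (hsphere : ∀ x ∈ sphere c R, w x < w x₁) :
    ∃ x₀ ∈ ball c R, IsLocalMax w x₀ ∧ w x₁ ≤ w x₀ := by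
  obtain ⟨x₀, hx₀, hmax⟩ :=
    (isCompact_closedBall c R).exists_isMaxOn ⟨x₁, hx₁⟩ hw.continuousOn
  have hx₀ball : x₀ ∈ ball c R := by
    rcases (mem_closedBall.mp hx₀).lt_or_eq with hlt | heq
    · exact hlt
    · exact absurd (hmax hx₁) (hsphere x₀ heq).not_ge
  exact ⟨x₀, hx₀ball, hmax.isLocalMax (closedBall_mem_nhds_of_mem hx₀ball), hmax hx₁⟩

theorem IsLocalMax.deriv_deriv_nonpos {f : ℝ → ℝ} {a : ℝ} (h : IsLocalMax f a)
    (hc : ContinuousAt f a) : deriv (deriv f) a ≤ 0 := by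
  by_contra! hpos
  -- the second derivative test makes `a` also a local minimum, so `f` is locally constant
  have hconst : f =ᶠ[𝓝 a] fun _ => f a :=
    ((isLocalMin_of_deriv_deriv_pos hpos h.deriv_eq_zero hc).and h).mono
      fun _ hx => le_antisymm hx.2 hx.1
  have hderiv : deriv f =ᶠ[𝓝 a] fun _ => 0 :=
    hconst.eventuallyEq_nhds.mono fun _ hx => hx.deriv_eq.trans (deriv_const _ _)
  rw [hderiv.deriv_eq, deriv_const] at hpos
  exact hpos.false

section SecondDerivative

variable {E : Type*} [NormedAddCommGroup E] [NormedSpace ℝ E] {F : E → ℝ}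

theorem ContDiff.differentiable_fderiv_apply (hF : ContDiff ℝ 2 F) (e : E) :
    Differentiable ℝ (fun y => fderiv ℝ F y e) :=
  ((hF.fderiv_right (m := 1) (by norm_num)).clm_apply contDiff_const).differentiable
    one_ne_zero

theorem IsLocalMax.fderiv_fderiv_apply_nonpos {x₀ : E} (h : IsLocalMax F x₀)
    (hF : ContDiff ℝ 2 F) (e : E) : fderiv ℝ (fun y => fderiv ℝ F y e) x₀ e ≤ 0 := by
  set L : ℝ → E := fun t => x₀ + t • e
  have hL : ∀ t, HasDerivAt L e t := fun t => by
    simpa [L] using ((hasDerivAt_id t).smul_const e).const_add x₀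
  have hL0 : L 0 = x₀ := by simp [L]
  have hderiv : deriv (F ∘ L) = fun t => fderiv ℝ F (L t) e := funext fun t =>
    ((hF.differentiable two_ne_zero (L t)).hasFDerivAt.comp_hasDerivAt t (hL t)).deriv
  have hderiv2 : deriv (deriv (F ∘ L)) 0 = fderiv ℝ (fun y => fderiv ℝ F y e) x₀ e := by
    rw [hderiv, ← hL0]
    exact ((hF.differentiable_fderiv_apply e (L 0)).hasFDerivAt.comp_hasDerivAt 0 (hL 0)).deriv
  rw [← hderiv2]
  rw [← hL0] at h
  exact (h.comp_continuous (hL 0).continuousAt).deriv_deriv_nonpos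
    (hF.continuous.continuousAt.comp (hL 0).continuousAt)

end SecondDerivative

theorem fderiv_fderiv_quadratic_apply {E : Type*} [NormedAddCommGroup E] [InnerProductSpace ℝ E]
    (c b : ℝ) (x e : E) :
    fderiv ℝ (fun y => fderiv ℝ (fun z => c * ‖z‖ ^ 2 + b) y e) x e = 2 * c * ‖e‖ ^ 2 := by
  have hfirst : (fun y => fderiv ℝ (fun z => c * ‖z‖ ^ 2 + b) y e) =
      fun y => 2 * c * innerSL ℝ e y := by
    funext y
    rw [(((hasStrictFDerivAt_norm_sq y).hasFDerivAt.const_mul c).add_const b).fderiv]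
    simp only [smul_apply, coe_innerSL_apply, real_inner_comm, nsmul_eq_mul,
      Nat.cast_ofNat, smul_eq_mul]
    ring
  rw [hfirst, ((innerSL ℝ e).hasFDerivAt.const_mul (2 * c)).fderiv]
  simp

theorem IsLocalMax.planeLaplacian_nonpos {w : ℝ² → ℝ} {x₀ : ℝ²} (h : IsLocalMax w x₀)
    (hw : ContDiff ℝ 2 w) : planeLaplacian w x₀ ≤ 0 :=
  Finset.sum_nonpos fun _ _ => h.fderiv_fderiv_apply_nonpos hw _

theorem planeLaplacian_add {f g : ℝ² → ℝ} (hf : ContDiff ℝ 2 f) (hg : ContDiff ℝ 2 g)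
    (x : ℝ²) : planeLaplacian (f + g) x = planeLaplacian f x + planeLaplacian g x := by
  rw [planeLaplacian, planeLaplacian, planeLaplacian, ← Finset.sum_add_distrib]
  refine Finset.sum_congr rfl fun i _ => ?_
  set e : ℝ² := EuclideanSpace.single i 1
  have hfirst : (fun y => fderiv ℝ (f + g) y e) = fun y => fderiv ℝ f y e + fderiv ℝ g y e :=
    funext fun y => by
      rw [fderiv_add (hf.differentiable two_ne_zero y) (hg.differentiable two_ne_zero y)]
      rfl
  rw [hfirst, fderiv_fun_add (hf.differentiable_fderiv_apply e x)
    (hg.differentiable_fderiv_apply e x)]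
  rfl

theorem planeLaplacian_quadratic (c b : ℝ) (x : ℝ²) :
    planeLaplacian (fun z => c * ‖z‖ ^ 2 + b) x = 4 * c := by
  simp only [planeLaplacian, fderiv_fderiv_quadratic_apply, PiLp.norm_single, norm_one, one_pow,
    mul_one, Finset.sum_const, Finset.card_univ, Fintype.card_fin, nsmul_eq_mul, Nat.cast_ofNat]
  ring

theorem nonpos_of_planeLaplacian_nonneg_on_pos {v : ℝ² → ℝ} (hv : ContDiff ℝ 2 v)
    (hneg : ∀ᶠ x in cocompact ℝ², v x < 0) (hΔ : ∀ x, 0 < v x → 0 ≤ planeLaplacian v x)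
    (x : ℝ²) : v x ≤ 0 := by
  by_contra! hx
  obtain ⟨R, hR⟩ : ∃ R, ∀ y : ℝ², R ≤ ‖y‖ → v y < 0 := by
    rw [← cobounded_eq_cocompact, ← comap_norm_atTop, eventually_comap, eventually_atTop] at hneg
    obtain ⟨R, hR⟩ := hneg
    exact ⟨R, fun y hy => hR ‖y‖ hy y rfl⟩
  have hxR : ‖x‖ < R := lt_of_not_ge fun h => (hR x h).not_gt hx
  have hR0 : 0 < R := (norm_nonneg x).trans_lt hxR
  set ε := v x / (2 * R ^ 2)
  have hε : 0 < ε := by positivity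
  set q : ℝ² → ℝ := fun z => ε * ‖z‖ ^ 2 + -(ε * R ^ 2)
  have hq : ContDiff ℝ 2 q := (contDiff_const.mul (contDiff_norm_sq ℝ)).add contDiff_const
  have hq_nonpos : ∀ z ∈ closedBall (0 : ℝ²) R, q z ≤ 0 := fun z hz => by
    have : ‖z‖ ≤ R := mem_closedBall_zero_iff.mp hz
    have : ‖z‖ ^ 2 ≤ R ^ 2 := by gcongr
    simp only [q]
    nlinarith
  have hvq_x : 0 < v x + q x := by
    have : ε * R ^ 2 = v x / 2 := by simp only [ε]; field_simp
    simp only [q]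
    nlinarith [sq_nonneg ‖x‖]
  have hsphere : ∀ z ∈ sphere (0 : ℝ²) R, (v + q) z < (v + q) x := fun z hz => by
    have hz : ‖z‖ = R := mem_sphere_zero_iff_norm.mp hz
    have : q z = 0 := by simp only [q, hz]; ring
    simp only [Pi.add_apply, this]
    linarith [hR z hz.ge]
  obtain ⟨x₀, hx₀, hmax, hle⟩ := exists_isLocalMax_mem_ball_of_lt_on_sphere
    (hv.continuous.add hq.continuous) (mem_closedBall_zero_iff.mpr hxR.le) hsphere
  have hvx₀ : 0 < v x₀ := by
    have := hq_nonpos x₀ (ball_subset_closedBall hx₀)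
    simp only [Pi.add_apply] at hle
    linarith
  have hΔmax := hmax.planeLaplacian_nonpos (hv.add hq)
  rw [planeLaplacian_add hv hq, planeLaplacian_quadratic] at hΔmax
  linarith [hΔ x₀ hvx₀]

theorem stmt6_general (φ v : EuclideanSpace ℝ (Fin 2) → ℝ)
    (hφ0 : ∀ x, φ x ≤ 0) (hv : ContDiff ℝ 2 v)
    (hsub : ∀ x, min (-(planeLaplacian v x)) (v x - φ x) ≤ 0)
    (hgv : Filter.limsup (fun x => v x / Real.log ‖x‖)
        (Filter.cocompact (EuclideanSpace ℝ (Fin 2))) ≤ -1) :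
    ∀ x, v x ≤ 0 := by
  have hlog : ∀ᶠ x in cocompact ℝ², 0 ≤ Real.log ‖x‖ :=
    (Real.tendsto_log_atTop.comp tendsto_norm_cocompact_atTop).eventually_ge_atTop 0
  have hneg := eventually_neg_of_limsup_div_neg hlog (hgv.trans_lt (by norm_num))
  refine nonpos_of_planeLaplacian_nonneg_on_pos hv hneg fun x hx => ?_
  have hsubharmonic := (min_le_iff.mp (hsub x)).resolve_right (by linarith [hφ0 x])
  linarith

theorem stmt6 (φ v : EuclideanSpace ℝ (Fin 2) → ℝ)
    (hφ : Continuous φ) (hφ0 : ∀ x, φ x ≤ 0) (hv : ContDiff ℝ 2 v)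
    (hsub : ∀ x, min (-(planeLaplacian v x)) (v x - φ x) ≤ 0)
    (hgv : Filter.limsup (fun x => v x / Real.log ‖x‖)
        (Filter.cocompact (EuclideanSpace ℝ (Fin 2))) ≤ -1) :
    ∀ x, v x ≤ 0 :=
  stmt6_general φ v hφ0 hv hsub hgv
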